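/- Boundary vanishing of the unbranched envelope: with Λ the open unit ball, g continuous nonnegative with compact support in Λ, g* > sup g, and H₁ the class of M-Lipschitz truncated harmonic patches with M ≥ g*/dist(supp g, ∂Λ), the envelope w₁(x) = inf{h(x) : h ∈ H₁, h ≥ g} satisfies w₁(x) = 0 for every x ∈ ∂Λ. -/

import Mathlib

/-
For a boundary point `x`, the affine barrier `u ↦ (1 - ⟪u, x⟫) / (δ / g*)` vanishes at `x`, is
nonnegative on the closed ball and has slope `g*/δ ≤ M`, so its truncation lies in `H₁`. It
dominates `g`: off the support trivially, and on the support because every point there has norm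
at most `1 - δ`, where the barrier is already at least `g*`. Since `g ≥ 0`, the envelope is also
nonnegative at `x`.
-/

open scoped Classical

open Metric
open scoped RealInnerProductSpace

/-- The truncated affine harmonic `h_{v,z,c}(u) = (c − u·v)/z` where this is `≤ g*`,
and `+∞` otherwise. -/
noncomputable def affinePatch {d : ℕ} (gstar : ℝ) (v : EuclideanSpace ℝ (Fin d))
    (z c : ℝ) : EuclideanSpace ℝ (Fin d) → EReal := fun u =>
  if (c - ⟪u, v⟫) / z ≤ gstar then (((c - ⟪u, v⟫) / z : ℝ) : EReal) else ⊤

theorem norm_le_one_sub_of_le_dist_sphere {E : Type*} [NormedAddCommGroup E] [NormedSpace ℝ E]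
    {x u : E} {δ : ℝ} (hx : x ∈ sphere (0 : E) 1) (hu : ‖u‖ ≤ 1)
    (h : ∀ v ∈ sphere (0 : E) 1, δ ≤ dist u v) : ‖u‖ ≤ 1 - δ := by
  rcases eq_or_ne u 0 with rfl | hu0
  · simpa [mem_sphere_zero_iff_norm.mp hx] using h x hx
  · have hpos : 0 < ‖u‖ := norm_pos_iff.mpr hu0
    have hdist : dist u (‖u‖⁻¹ • u) = 1 - ‖u‖ := by
      rw [dist_eq_norm, show u - ‖u‖⁻¹ • u = (1 - ‖u‖⁻¹) • u by rw [sub_smul, one_smul],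
        norm_smul, Real.norm_eq_abs, abs_of_nonpos (by linarith [one_le_inv_iff₀.mpr ⟨hpos, hu⟩])]
      field_simp
      ring
    have hunit : ‖u‖⁻¹ • u ∈ sphere (0 : E) 1 :=
      mem_sphere_zero_iff_norm.mpr (norm_smul_inv_norm hu0)
    linarith [h _ hunit]

theorem real_inner_le_one_of_norm_le_one {F : Type*} [NormedAddCommGroup F]
    [InnerProductSpace ℝ F] {u x : F} (hu : ‖u‖ ≤ 1) (hx : ‖x‖ ≤ 1) : ⟪u, x⟫ ≤ 1 :=
  (real_inner_le_norm u x).trans (mul_le_one₀ hu (norm_nonneg x) hx)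

theorem one_sub_real_inner_div_nonneg {F : Type*} [NormedAddCommGroup F]
    [InnerProductSpace ℝ F] {u x : F} {z : ℝ} (hu : ‖u‖ ≤ 1) (hx : ‖x‖ ≤ 1) (hz : 0 ≤ z) :
    0 ≤ (1 - ⟪u, x⟫) / z :=
  div_nonneg (sub_nonneg.mpr (real_inner_le_one_of_norm_le_one hu hx)) hz

namespace affinePatch

variable {d : ℕ} {gstar z c : ℝ} {u v : EuclideanSpace ℝ (Fin d)}

theorem coe_le : (((c - ⟪u, v⟫) / z : ℝ) : EReal) ≤ affinePatch gstar v z c u := by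
  unfold affinePatch
  split_ifs <;> simp

theorem self_eq_zero (hv : ‖v‖ = 1) (hgstar : 0 ≤ gstar) : affinePatch gstar v z 1 v = 0 := by
  simp [affinePatch, hv, hgstar]

theorem coe_le_of_norm_le_one_sub {δ : ℝ} {x : EuclideanSpace ℝ (Fin d)}
    {g : EuclideanSpace ℝ (Fin d) → ℝ}
    (hg0 : ∀ u, 0 ≤ g u) (hgs : ∀ u, g u < gstar) (hδ : 0 < δ)
    (hsmall : ∀ u ∈ tsupport g, ‖u‖ ≤ 1 - δ) (hx : ‖x‖ = 1) (hu : ‖u‖ ≤ 1) :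
    (g u : EReal) ≤ affinePatch gstar x (δ / gstar) 1 u := by
  have hgstar : 0 < gstar := (hg0 u).trans_lt (hgs u)
  refine le_trans (EReal.coe_le_coe_iff.mpr ?_) coe_le
  by_cases hsupp : u ∈ tsupport g
  · have hinner : ⟪u, x⟫ ≤ 1 - δ :=
      (real_inner_le_norm u x).trans (by rw [hx, mul_one]; exact hsmall u hsupp)
    calc g u ≤ gstar := (hgs u).le
      _ = δ / (δ / gstar) := by field_simp
      _ ≤ (1 - ⟪u, x⟫) / (δ / gstar) := by gcongr; linarith
  · rw [image_eq_zero_of_notMem_tsupport hsupp]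
    exact one_sub_real_inner_div_nonneg hu hx.le (by positivity)

end affinePatch

theorem unbranched_envelope_boundary_vanishing_general {d : ℕ}
    (g : EuclideanSpace ℝ (Fin d) → ℝ)
    (hg0 : ∀ u, 0 ≤ g u)
    (hsuppΛ : tsupport g ⊆ ball (0 : EuclideanSpace ℝ (Fin d)) 1)
    (δ : ℝ) (hδpos : 0 < δ)
    (hδ : ∀ u ∈ tsupport g, ∀ v ∈ sphere (0 : EuclideanSpace ℝ (Fin d)) 1, δ ≤ dist u v)
    (gstar : ℝ) (hgs : ∀ u, g u < gstar)
    (M : ℝ) (hM : gstar / δ ≤ M)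
    -- the class H₁ of M-Lipschitz truncated harmonic patches contains the
    -- nonnegative M-Lipschitz truncated affine harmonics
    (H₁ : Set (EuclideanSpace ℝ (Fin d) → EReal))
    (haff : ∀ (v : EuclideanSpace ℝ (Fin d)) (z c : ℝ), 0 < z →
      (∀ u ∈ ball (0 : EuclideanSpace ℝ (Fin d)) 1, 0 ≤ (c - ⟪u, v⟫) / z) →
      ‖v‖ / z ≤ M → affinePatch gstar v z c ∈ H₁)
    -- the unbranched envelope
    (w₁ : EuclideanSpace ℝ (Fin d) → EReal)
    (hw₁ : ∀ x, w₁ x = ⨅ h ∈ {h ∈ H₁ |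
      ∀ u ∈ closure (ball (0 : EuclideanSpace ℝ (Fin d)) 1), (g u : EReal) ≤ h u}, h x) :
    ∀ x ∈ sphere (0 : EuclideanSpace ℝ (Fin d)) 1, w₁ x = 0 := by
  intro x hx
  have hx1 : ‖x‖ = 1 := mem_sphere_zero_iff_norm.mp hx
  have hgstar : 0 < gstar := (hg0 0).trans_lt (hgs 0)
  have hsmall : ∀ u ∈ tsupport g, ‖u‖ ≤ 1 - δ := fun u hu =>
    norm_le_one_sub_of_le_dist_sphere hx (mem_ball_zero_iff.mp (hsuppΛ hu)).le (hδ u hu)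
  have hbarrier : affinePatch gstar x (δ / gstar) 1 ∈ {h ∈ H₁ |
      ∀ u ∈ closure (ball (0 : EuclideanSpace ℝ (Fin d)) 1), (g u : EReal) ≤ h u} := by
    rw [closure_ball _ one_ne_zero]
    refine ⟨haff x _ 1 (div_pos hδpos hgstar) (fun u hu => ?_) (by rwa [hx1, one_div_div]),
      fun u hu => ?_⟩
    · exact one_sub_real_inner_div_nonneg (mem_ball_zero_iff.mp hu).le hx1.le (by positivity)
    · exact affinePatch.coe_le_of_norm_le_one_sub hg0 hgs hδpos hsmall hx1
        (mem_closedBall_zero_iff.mp hu)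
  have hx_closure : x ∈ closure (ball (0 : EuclideanSpace ℝ (Fin d)) 1) :=
    sphere_subset_closedBall.trans (closure_ball _ one_ne_zero).ge hx
  rw [hw₁]
  refine le_antisymm ((iInf₂_le _ hbarrier).trans_eq (affinePatch.self_eq_zero hx1 hgstar.le))
    (le_iInf₂ fun h hh => ?_)
  exact (EReal.coe_nonneg.mpr (hg0 x)).trans (hh.2 x hx_closure)

/-- boundary vanishing of the unbranched envelope: `w₁ = 0` on `∂Λ`. -/
theorem unbranched_envelope_boundary_vanishing {d : ℕ} (hd : 2 ≤ d)
    (g : EuclideanSpace ℝ (Fin d) → ℝ)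
    (hgc : Continuous g) (hg0 : ∀ u, 0 ≤ g u)
    (hsupp : IsCompact (tsupport g))
    (hsuppΛ : tsupport g ⊆ ball (0 : EuclideanSpace ℝ (Fin d)) 1)
    (δ : ℝ) (hδpos : 0 < δ)
    (hδ : ∀ u ∈ tsupport g, ∀ v ∈ sphere (0 : EuclideanSpace ℝ (Fin d)) 1, δ ≤ dist u v)
    (gstar : ℝ) (hgs : ∀ u, g u < gstar)
    (M : ℝ) (hM : gstar / δ ≤ M)
    -- the class H₁ of M-Lipschitz truncated harmonic patches contains the
    -- nonnegative M-Lipschitz truncated affine harmonics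
    (H₁ : Set (EuclideanSpace ℝ (Fin d) → EReal))
    (haff : ∀ (v : EuclideanSpace ℝ (Fin d)) (z c : ℝ), 0 < z →
      (∀ u ∈ ball (0 : EuclideanSpace ℝ (Fin d)) 1, 0 ≤ (c - ⟪u, v⟫) / z) →
      ‖v‖ / z ≤ M → affinePatch gstar v z c ∈ H₁)
    -- the unbranched envelope
    (w₁ : EuclideanSpace ℝ (Fin d) → EReal)
    (hw₁ : ∀ x, w₁ x = ⨅ h ∈ {h ∈ H₁ |
      ∀ u ∈ closure (ball (0 : EuclideanSpace ℝ (Fin d)) 1), (g u : EReal) ≤ h u}, h x) :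
    ∀ x ∈ sphere (0 : EuclideanSpace ℝ (Fin d)) 1, w₁ x = 0 :=
  unbranched_envelope_boundary_vanishing_general g hg0 hsuppΛ δ hδpos hδ gstar hgs M hM H₁ haff w₁
    hw₁
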